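/- arXiv:1301.4127 — 3 statements merged into one kernel-verified Lean document; each statement's English description precedes it below -/
import Mathlib

section
/- ∑_{m=1}^∞ ∑_{n=1}^∞ 1/(m² n² (m+n)²) = π⁶/2835. -/
/-!
Let `T` be the double sum. Summing it along the rows `m = M` and along the diagonals
`m + n = N` both give `T`. The partial fractions `1/(mn) = (1/N)(1/m + 1/n)` on the diagonal and
`1/(Mn) = (1/M)(1/n - 1/(M+n))` on the row evaluate every diagonal and every row in terms of `ζ(2)`
and the partial sums `H₁(N)`, `H₂(N)` of `ζ(1)`, `ζ(2)`. In `diagonal + 2 * row` the partial sums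
cancel, leaving `4ζ(2)/N⁴ - 6/N⁶`, so `3T = 4ζ(2)ζ(4) - 6ζ(6) = π⁶/945`.
-/

open Real Finset Filter Topology

theorem hasSum_sum_antidiagonal {A α : Type*} [AddMonoid A] [HasAntidiagonal A]
    [AddCommMonoid α] [TopologicalSpace α] [ContinuousAdd α] [RegularSpace α]
    {f : A × A → α} {a : α} (h : HasSum f a) :
    HasSum (fun n ↦ ∑ p ∈ antidiagonal n, f p) a :=
  (HasAntidiagonal.sigmaAntidiagonalEquivProd.hasSum_iff.2 h).sigma fun n ↦ by
    rw [← sum_coe_sort]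
    exact hasSum_fintype _

theorem hasSum_sub_add_of_antitone {f : ℕ → ℝ} (hf : Antitone f) (hlim : Tendsto f atTop (𝓝 0))
    (N : ℕ) : HasSum (fun n ↦ f n - f (n + N)) (∑ i ∈ range N, f i) := by
  rw [hasSum_iff_tendsto_nat_of_nonneg fun n ↦ sub_nonneg.2 (hf (Nat.le_add_right n N))]
  have partial_sum (M : ℕ) : ∑ n ∈ range M, (f n - f (n + N)) =
      ∑ i ∈ range N, f i - ∑ i ∈ range N, f (M + i) := by
    have h₁ := sum_range_add f M N
    have h₂ := sum_range_add f N M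
    rw [add_comm M N] at h₁
    simp only [sum_sub_distrib, add_comm _ N]
    linarith
  have htail : Tendsto (fun M ↦ ∑ i ∈ range N, f (M + i)) atTop (𝓝 0) := by
    simpa using tendsto_finsetSum (range N) fun i _ ↦ hlim.comp (tendsto_add_atTop_nat i)
  simpa [partial_sum] using tendsto_const_nhds.sub htail

theorem tsum_pnat_tsum_pnat {α : Type*} [AddCommMonoid α] [TopologicalSpace α] (f : ℕ → ℕ → α) :
    ∑' (m : ℕ+) (n : ℕ+), f m n = ∑' (m : ℕ) (n : ℕ), f (m + 1) (n + 1) := by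
  rw [tsum_pnat_eq_tsum_succ (f := fun m ↦ ∑' n : ℕ+, f m n)]
  exact tsum_congr fun m ↦ tsum_pnat_eq_tsum_succ

theorem bernoulli_six : bernoulli 6 = 1 / 42 := by
  rw [bernoulli_eq_bernoulli'_of_ne_one (by norm_num), bernoulli'_def]
  norm_num [sum_range_succ, bernoulli'_zero, bernoulli'_one, bernoulli'_two, bernoulli'_three,
    bernoulli'_four, bernoulli'_eq_zero_of_odd (by decide : Odd 5) (by norm_num), Nat.choose]

theorem hasSum_zeta_six : HasSum (fun n : ℕ ↦ 1 / (n : ℝ) ^ 6) (π ^ 6 / 945) := by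
  convert hasSum_zeta_nat (k := 3) three_ne_zero using 1
  rw [bernoulli_six]
  norm_num [Nat.factorial]
  ring

namespace WittenZetaA2

noncomputable def partialZeta (p n : ℕ) : ℝ := ∑ k ∈ range n, 1 / ((k : ℝ) + 1) ^ p

theorem partialZeta_succ (p n : ℕ) :
    partialZeta p (n + 1) = partialZeta p n + 1 / ((n : ℝ) + 1) ^ p :=
  sum_range_succ _ _

theorem sum_range_succ_one_div_pow {p : ℕ} (hp : p ≠ 0) (n : ℕ) :
    ∑ k ∈ range (n + 1), 1 / (k : ℝ) ^ p = partialZeta p n := by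
  simp [sum_range_succ', partialZeta, hp]

theorem hasSum_one_div_add_pow {p : ℕ} {s : ℝ} (hp : p ≠ 0)
    (h : HasSum (fun n : ℕ ↦ 1 / (n : ℝ) ^ p) s) (N : ℕ) :
    HasSum (fun n : ℕ ↦ 1 / ((n : ℝ) + N + 1) ^ p) (s - partialZeta p N) := by
  rw [← sum_range_succ_one_div_pow hp]
  simpa [add_assoc] using (hasSum_nat_add_iff' (N + 1)).2 h

theorem hasSum_one_div_succ_pow {p : ℕ} {s : ℝ} (hp : p ≠ 0)
    (h : HasSum (fun n : ℕ ↦ 1 / (n : ℝ) ^ p) s) :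
    HasSum (fun n : ℕ ↦ 1 / ((n : ℝ) + 1) ^ p) s := by
  simpa [partialZeta] using hasSum_one_div_add_pow hp h 0

theorem hasSum_one_div_succ_sub_one_div_add (N : ℕ) :
    HasSum (fun n : ℕ ↦ 1 / ((n : ℝ) + 1) - 1 / ((n : ℝ) + N + 1)) (partialZeta 1 N) := by
  have hanti : Antitone fun n : ℕ ↦ 1 / ((n : ℝ) + 1) := fun m n hmn ↦
    one_div_le_one_div_of_le (by positivity) (by gcongr)
  simpa [partialZeta, add_right_comm] using
    hasSum_sub_add_of_antitone hanti tendsto_one_div_add_atTop_nhds_zero_nat N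

def summand {K : Type*} [Field K] (x y : K) : K := 1 / (x ^ 2 * y ^ 2 * (x + y) ^ 2)

theorem summand_eq_diagonal_partialFractions {K : Type*} [Field K] {x y : K} (hx : x ≠ 0)
    (hy : y ≠ 0) (hxy : x + y ≠ 0) :
    summand x y = 1 / (x + y) ^ 4 * (1 / x ^ 2 + 1 / y ^ 2) + 2 / (x + y) ^ 5 * (1 / x + 1 / y) := by
  unfold summand
  field_simp
  ring

theorem summand_eq_row_partialFractions {K : Type*} [Field K] {x y : K} (hx : x ≠ 0)
    (hy : y ≠ 0) (hxy : x + y ≠ 0) :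
    summand x y = 1 / x ^ 4 * (1 / y ^ 2 + 1 / (x + y) ^ 2) - 2 / x ^ 5 * (1 / y - 1 / (x + y)) := by
  unfold summand
  field_simp
  ring

theorem summand_le {x y : ℝ} (hx : 1 ≤ x) (hy : 0 < y) : summand x y ≤ 1 / x ^ 2 * (1 / y ^ 2) := by
  rw [summand, one_div_mul_one_div]
  exact one_div_le_one_div_of_le (by positivity)
    (le_mul_of_one_le_right (by positivity) (one_le_pow₀ (by linarith)))

theorem summable_summand : Summable fun p : ℕ × ℕ ↦ summand ((p.1 : ℝ) + 1) ((p.2 : ℝ) + 1) := by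
  have hζ₂ := (hasSum_one_div_succ_pow two_ne_zero hasSum_zeta_two).summable
  refine .of_nonneg_of_le (fun p ↦ by unfold summand; positivity)
    (fun p ↦ summand_le (le_add_of_nonneg_left p.1.cast_nonneg) (by positivity))
    (hζ₂.mul_of_nonneg hζ₂ (fun n ↦ by positivity) (fun n ↦ by positivity))

noncomputable def rowSum (M : ℕ) : ℝ :=
  (π ^ 2 / 3 - partialZeta 2 (M + 1)) / ((M : ℝ) + 1) ^ 4
    - 2 * partialZeta 1 (M + 1) / ((M : ℝ) + 1) ^ 5

noncomputable def diagonalSum (M : ℕ) : ℝ :=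
  2 * partialZeta 2 M / ((M : ℝ) + 1) ^ 4 + 4 * partialZeta 1 M / ((M : ℝ) + 1) ^ 5

theorem hasSum_summand_row (M : ℕ) :
    HasSum (fun n : ℕ ↦ summand ((M : ℝ) + 1) ((n : ℝ) + 1)) (rowSum M) := by
  have hζ₂ := hasSum_one_div_succ_pow two_ne_zero hasSum_zeta_two
  have hζ₂_tail := hasSum_one_div_add_pow two_ne_zero hasSum_zeta_two (M + 1)
  have h := ((hζ₂.add hζ₂_tail).mul_left (1 / ((M : ℝ) + 1) ^ 4)).sub
    ((hasSum_one_div_succ_sub_one_div_add (M + 1)).mul_left (2 / ((M : ℝ) + 1) ^ 5))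
  convert h.congr_fun fun n ↦ ?_ using 1
  · rfl -- the `AddCommMonoid ℝ` instance of `h` comes from `AddCommGroup ℝ`
  · rw [rowSum]
    ring
  · rw [summand_eq_row_partialFractions (by positivity) (by positivity) (by positivity)]
    push_cast
    ring

theorem sum_antidiagonal_summand (K : ℕ) :
    ∑ p ∈ antidiagonal K, summand ((p.1 : ℝ) + 1) ((p.2 : ℝ) + 1) = diagonalSum (K + 1) := by
  have hterm (p : ℕ × ℕ) (hp : p ∈ antidiagonal K) :
      summand ((p.1 : ℝ) + 1) ((p.2 : ℝ) + 1)
        = 1 / ((K : ℝ) + 2) ^ 4 * (1 / ((p.1 : ℝ) + 1) ^ 2 + 1 / ((p.2 : ℝ) + 1) ^ 2)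
          + 2 / ((K : ℝ) + 2) ^ 5 * (1 / ((p.1 : ℝ) + 1) ^ 1 + 1 / ((p.2 : ℝ) + 1) ^ 1) := by
    have hsum : (p.1 : ℝ) + 1 + ((p.2 : ℝ) + 1) = (K : ℝ) + 2 := by
      rw [HasAntidiagonal.mem_antidiagonal] at hp
      rw [← hp]
      push_cast
      ring
    rw [summand_eq_diagonal_partialFractions (by positivity) (by positivity) (by positivity), hsum,
      pow_one, pow_one]
  have hsym (q : ℕ) : ∑ p ∈ antidiagonal K, (1 / ((p.1 : ℝ) + 1) ^ q + 1 / ((p.2 : ℝ) + 1) ^ q)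
      = 2 * partialZeta q (K + 1) := by
    have hswap := Nat.sum_antidiagonal_swap (n := K) (f := fun p ↦ 1 / ((p.1 : ℝ) + 1) ^ q)
    simp only [Prod.fst_swap] at hswap
    rw [sum_add_distrib, hswap, ← two_mul,
      Nat.sum_antidiagonal_eq_sum_range_succ (fun i _ ↦ 1 / ((i : ℝ) + 1) ^ q)]
    rfl
  rw [sum_congr rfl hterm, sum_add_distrib, ← mul_sum, ← mul_sum, hsym, hsym, diagonalSum]
  push_cast
  ring

theorem diagonalSum_add_two_mul_rowSum (M : ℕ) :
    diagonalSum M + 2 * rowSum M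
      = 2 * π ^ 2 / 3 * (1 / ((M : ℝ) + 1) ^ 4) - 6 * (1 / ((M : ℝ) + 1) ^ 6) := by
  rw [diagonalSum, rowSum, partialZeta_succ, partialZeta_succ]
  field_simp
  ring

theorem hasSum_summand :
    HasSum (fun p : ℕ × ℕ ↦ summand ((p.1 : ℝ) + 1) ((p.2 : ℝ) + 1)) (π ^ 6 / 2835) := by
  obtain ⟨T, hT⟩ := summable_summand
  have hrow : HasSum rowSum T := hT.prod_fiberwise hasSum_summand_row
  have hdiag : HasSum diagonalSum T := by
    have hdiag_succ : HasSum (fun K ↦ diagonalSum (K + 1)) T := by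
      simpa only [sum_antidiagonal_summand] using hasSum_sum_antidiagonal hT
    have hdiag_zero : diagonalSum 0 = 0 := by simp [diagonalSum, partialZeta]
    exact (hasSum_nat_add_iff' 1).1 (by simpa [hdiag_zero] using hdiag_succ)
  have hζ := ((hasSum_one_div_succ_pow four_ne_zero hasSum_zeta_four).mul_left (2 * π ^ 2 / 3)).sub
    ((hasSum_one_div_succ_pow (by norm_num) hasSum_zeta_six).mul_left 6)
  have h3T : T + 2 * T = 2 * π ^ 2 / 3 * (π ^ 4 / 90) - 6 * (π ^ 6 / 945) :=
    (hdiag.add (hrow.mul_left 2)).unique (hζ.congr_fun diagonalSum_add_two_mul_rowSum)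
  convert hT using 1
  linarith

end WittenZetaA2

theorem stmt_8 :
    ∑' (m : ℕ+), ∑' (n : ℕ+),
        (1 : ℝ) / (((m : ℕ) : ℝ) ^ 2 * ((n : ℕ) : ℝ) ^ 2 * (((m : ℕ) : ℝ) + ((n : ℕ) : ℝ)) ^ 2)
      = Real.pi ^ 6 / 2835 := by
  rw [tsum_pnat_tsum_pnat (fun m n : ℕ ↦
      (1 : ℝ) / ((m : ℝ) ^ 2 * (n : ℝ) ^ 2 * ((m : ℝ) + (n : ℝ)) ^ 2)),
    ← WittenZetaA2.hasSum_summand.tsum_eq, WittenZetaA2.summable_summand.tsum_prod]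
  push_cast
  rfl
end

section
/- ∑_{m₁=1}^∞ ∑_{m₂=1}^∞ 1/(m₁⁴ (m₁+m₂)⁴) = π⁸/113400. -/
open Finset in
lemma bern5 : bernoulli' 5 = 0 := by
  rw [bernoulli'_def]
  norm_num [sum_range_succ, Nat.choose]

open Finset in
lemma bern6 : bernoulli' 6 = 1/42 := by
  rw [bernoulli'_def]
  norm_num [sum_range_succ, bern5, Nat.choose]

open Finset in
lemma bern7 : bernoulli' 7 = 0 := by
  rw [bernoulli'_def]
  norm_num [sum_range_succ, bern5, bern6, Nat.choose]

open Finset in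
lemma bern8 : bernoulli' 8 = -1/30 := by
  rw [bernoulli'_def]
  norm_num [sum_range_succ, bern5, bern6, bern7, Nat.choose]

lemma zeta8 : HasSum (fun n : ℕ => (1 : ℝ) / (n : ℝ) ^ 8) (Real.pi ^ 8 / 9450) := by
  have hb : bernoulli 8 = -1/30 := by
    rw [bernoulli_eq_bernoulli'_of_ne_one (by norm_num), bern8]
  convert hasSum_zeta_nat (k := 4) (by norm_num) using 1
  rw [hb]
  norm_num [Nat.factorial]
  ring

open Real

noncomputable def gfun : ℕ+ × ℕ+ → ℝ := fun p =>
  (1 : ℝ) / (((p.1 : ℕ) : ℝ) ^ 4 * (((p.1 : ℕ) : ℝ) + ((p.2 : ℕ) : ℝ)) ^ 4)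

def sLT : Set (ℕ+ × ℕ+) := {p | p.1 < p.2}
def sGT : Set (ℕ+ × ℕ+) := {p | p.2 < p.1}
def sEQ : Set (ℕ+ × ℕ+) := {p | p.1 = p.2}

def eLT : ℕ+ × ℕ+ ≃ sLT where
  toFun p := ⟨(p.1, p.1 + p.2), PNat.lt_add_right p.1 p.2⟩
  invFun q := (q.1.1, q.1.2 - q.1.1)
  left_inv p := by
    have h := PNat.add_sub_of_lt (PNat.lt_add_right p.1 p.2)
    have h2 : p.1 + p.2 - p.1 = p.2 := by
      conv_rhs at h => rw [show p.1 + p.2 = p.1 + p.2 from rfl]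
      exact add_left_cancel h
    simp [h2]
  right_inv q := by
    ext
    · rfl
    · exact PNat.add_sub_of_lt q.2

def eGT : ℕ+ × ℕ+ ≃ sGT where
  toFun p := ⟨(p.1 + p.2, p.1), PNat.lt_add_right p.1 p.2⟩
  invFun q := (q.1.2, q.1.1 - q.1.2)
  left_inv p := by
    have h := PNat.add_sub_of_lt (PNat.lt_add_right p.1 p.2)
    have h2 : p.1 + p.2 - p.1 = p.2 := add_left_cancel h
    simp [h2]
  right_inv q := by
    ext
    · exact PNat.add_sub_of_lt q.2
    · rfl

def eEQ : ℕ+ ≃ sEQ where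
  toFun n := ⟨(n, n), rfl⟩
  invFun q := q.1.1
  left_inv n := rfl
  right_inv q := by
    ext
    · rfl
    · exact q.2

theorem stmt_11 :
    ∑' (m : ℕ+), ∑' (n : ℕ+),
        (1 : ℝ) / (((m : ℕ) : ℝ) ^ 4 * (((m : ℕ) : ℝ) + ((n : ℕ) : ℝ)) ^ 4)
      = Real.pi ^ 8 / 113400 := by
  have hvanish : ∀ (k : ℕ), k ≠ 0 → ∀ (x : ℕ), x ∉ Set.range ((↑) : ℕ+ → ℕ) →
      (1 : ℝ) / (x : ℝ) ^ k = 0 := by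
    intro k hk x hx
    have hx0 : x = 0 := by
      by_contra h
      exact hx ⟨⟨x, Nat.pos_of_ne_zero h⟩, rfl⟩
    subst hx0
    simp [zero_pow hk]
  have hz4 : HasSum (fun n : ℕ+ => (1 : ℝ) / ((n : ℕ) : ℝ) ^ 4) (π ^ 4 / 90) :=
    (Function.Injective.hasSum_iff PNat.coe_injective (hvanish 4 (by norm_num))).mpr hasSum_zeta_four
  have hz8 : HasSum (fun n : ℕ+ => (1 : ℝ) / ((n : ℕ) : ℝ) ^ 8) (π ^ 8 / 9450) :=
    (Function.Injective.hasSum_iff PNat.coe_injective (hvanish 8 (by norm_num))).mpr zeta8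
  set f : ℕ+ → ℝ := fun n => (1 : ℝ) / ((n : ℕ) : ℝ) ^ 4 with hf
  set F : ℕ+ × ℕ+ → ℝ := fun p => f p.1 * f p.2 with hFdef
  have hnorm : (fun n : ℕ+ => ‖f n‖) = f := by
    funext n
    exact Real.norm_of_nonneg (by positivity)
  have hFs : Summable F := by
    apply summable_mul_of_summable_norm (f := f) (g := f) <;>
      rw [hnorm] <;> exact hz4.summable
  have hF : HasSum F (π ^ 4 / 90 * (π ^ 4 / 90)) := hz4.mul hz4 hFs
  -- the three pieces
  have hgLT : (F ∘ (↑) : sLT → ℝ) ∘ eLT = gfun := by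
    funext p
    show f p.1 * f (p.1 + p.2) = _
    rw [hf]
    simp only [gfun]
    rw [div_mul_div_comm, one_mul]
    push_cast
    ring
  have hgGT : (F ∘ (↑) : sGT → ℝ) ∘ eGT = gfun := by
    funext p
    show f (p.1 + p.2) * f p.1 = _
    rw [hf]
    simp only [gfun]
    rw [div_mul_div_comm, one_mul]
    push_cast
    ring
  have hgEQ : (F ∘ (↑) : sEQ → ℝ) ∘ eEQ
      = fun n : ℕ+ => (1 : ℝ) / ((n : ℕ) : ℝ) ^ 8 := by
    funext n
    show f n * f n = _
    rw [hf]
    rw [div_mul_div_comm, one_mul, ← pow_add]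
  have hsum_g : Summable gfun := by
    rw [← hgLT]
    exact (eLT.summable_iff).mpr (hFs.subtype _)
  set T : ℝ := ∑' p, gfun p with hT
  have hLT : HasSum (F ∘ (↑) : sLT → ℝ) T := by
    apply (eLT.hasSum_iff).mp
    rw [hgLT]
    exact hsum_g.hasSum
  have hGT : HasSum (F ∘ (↑) : sGT → ℝ) T := by
    apply (eGT.hasSum_iff).mp
    rw [hgGT]
    exact hsum_g.hasSum
  have hEQ : HasSum (F ∘ (↑) : sEQ → ℝ) (π ^ 8 / 9450) := by
    apply (eEQ.hasSum_iff).mp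
    rw [hgEQ]
    exact hz8
  rw [hasSum_subtype_iff_indicator] at hLT hGT hEQ
  have hcomb := (hLT.add hGT).add hEQ
  have hsplit : (fun p => sLT.indicator F p + sGT.indicator F p + sEQ.indicator F p) = F := by
    funext p
    rcases lt_trichotomy p.1 p.2 with h | h | h
    · simp [Set.indicator_apply, sLT, sGT, sEQ, h, h.ne, h.asymm]
    · simp [Set.indicator_apply, sLT, sGT, sEQ, h, lt_irrefl]
    · simp [Set.indicator_apply, sLT, sGT, sEQ, h, h.ne', h.asymm]
  rw [hsplit] at hcomb
  have hval : T + T + π ^ 8 / 9450 = π ^ 4 / 90 * (π ^ 4 / 90) := hcomb.unique hF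
  have hpow : π ^ 4 / 90 * (π ^ 4 / 90) = π ^ 8 / 8100 := by ring
  have hTval : T = π ^ 8 / 113400 := by rw [hpow] at hval; linarith
  calc ∑' (m : ℕ+), ∑' (n : ℕ+),
        (1 : ℝ) / (((m : ℕ) : ℝ) ^ 4 * (((m : ℕ) : ℝ) + ((n : ℕ) : ℝ)) ^ 4)
      = ∑' p, gfun p := (Summable.tsum_prod' hsum_g hsum_g.prod_factor).symm
    _ = π ^ 8 / 113400 := hTval
end

section
/- ∑_{m₁,…,m₅ ≥ 1} 1/(m₁⁴ (m₁+m₂)⁴ (m₁+m₂+m₃)⁴ (m₁+m₂+m₃+m₄)⁴ (m₁+m₂+m₃+m₄+m₅)⁴) = π²⁰/548828480360160000. -/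
/-!
The nested sum is the multiple zeta value ζ(4,4,4,4,4) = ∑_{n₁<⋯<n₅} ∏ nᵢ⁻⁴, i.e. the fifth
elementary symmetric function e₅ of the numbers xₙ = n⁻⁴, taken as a limit over finite sets of
indices. Newton's identities write 120·e₅ as a polynomial in the power sums pⱼ = ∑ xₙʲ = ζ(4j), and
Euler's evaluation of ζ(2k) by Bernoulli numbers makes ζ(4), ζ(8), …, ζ(20) rational multiples of
π⁴, π⁸, …, π²⁰.
-/

open Finset Filter Topology Real
open scoped Nat

namespace Finset

variable {α R : Type*}

def powerSum [CommSemiring R] (u : Finset α) (x : α → R) (j : ℕ) : R := ∑ i ∈ u, x i ^ j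

variable [CommRing R]

theorem mul_esymm_map_val_eq_sum (u : Finset α) (x : α → R) (k : ℕ) :
    k * (u.val.map x).esymm k = (-1) ^ (k + 1) *
      ∑ a ∈ antidiagonal k with a.1 < k,
        (-1) ^ a.1 * (u.val.map x).esymm a.1 * u.powerSum x a.2 := by
  have h := congrArg (MvPolynomial.aeval (R := ℤ) fun i : u => x i)
    (MvPolynomial.mul_esymm_eq_sum u ℤ k)
  have hmap : (univ : Finset u).val.map (fun i : u => x i) = u.val.map x :=
    Multiset.attach_map_val' _ _
  have hpsum (j : ℕ) : ∑ i : u, x i ^ j = u.powerSum x j := sum_coe_sort u (x · ^ j)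
  simpa only [map_mul, map_natCast, MvPolynomial.aeval_esymm_eq_multiset_esymm, map_pow, map_neg,
    map_one, map_sum, MvPolynomial.psum, MvPolynomial.aeval_X, hmap, hpsum] using h

theorem esymm_map_val_five (u : Finset α) (x : α → R) :
    let p := u.powerSum x
    120 * (u.val.map x).esymm 5 = p 1 ^ 5 - 10 * p 1 ^ 3 * p 2 + 15 * p 1 * p 2 ^ 2
      + 20 * p 1 ^ 2 * p 3 - 20 * p 2 * p 3 - 30 * p 1 * p 4 + 24 * p 5 := by
  intro p
  have e0 : (u.val.map x).esymm 0 = 1 := by simp [Multiset.esymm]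
  have newton (k : ℕ) := u.mul_esymm_map_val_eq_sum x k
  have n1 := newton 1
  have n2 := newton 2
  have n3 := newton 3
  have n4 := newton 4
  have n5 := newton 5
  simp only [sum_filter, Nat.antidiagonal_succ] at n1 n2 n3 n4 n5
  norm_num [e0] at n1 n2 n3 n4 n5
  set e := (u.val.map x).esymm
  have c2 : 2 * e 2 = p 1 ^ 2 - p 2 := by linear_combination n2 + p 1 * n1
  have c3 : 6 * e 3 = p 1 ^ 3 - 3 * p 1 * p 2 + 2 * p 3 := by
    linear_combination 2 * n3 + p 1 * c2 - 2 * p 2 * n1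
  have c4 : 24 * e 4 = p 1 ^ 4 - 6 * p 1 ^ 2 * p 2 + 3 * p 2 ^ 2 + 8 * p 1 * p 3 - 6 * p 4 := by
    linear_combination 6 * n4 + p 1 * c3 - 3 * p 2 * c2 + 6 * p 3 * n1
  linear_combination 24 * n5 + p 1 * c4 - 4 * p 2 * c3 + 12 * p 3 * c2 - 24 * p 4 * n1

end Finset

section Limits

variable {α R : Type*}

theorem hasSum_prod_orderEmbedding_iff [LinearOrder α] [CommSemiring R] [TopologicalSpace R]
    {k : ℕ} {x : α → R} {S : R} :
    HasSum (fun f : Fin k ↪o α => ∏ i, x (f i)) S ↔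
      HasSum (fun s : Set.powersetCard α k => ∏ i ∈ (s : Finset α), x i) S := by
  rw [← Set.powersetCard.ofFinEmbEquiv.hasSum_iff]
  simp [Function.comp_def, Set.powersetCard.ofFinEmbEquiv_apply, Set.powersetCard.val_ofFinEmb]

theorem HasSum.tendsto_esymm [CommSemiring R] [TopologicalSpace R] {k : ℕ} {x : α → R} {S : R}
    (h : HasSum (fun s : Set.powersetCard α k => ∏ i ∈ (s : Finset α), x i) S) :
    Tendsto (fun u : Finset α => (u.val.map x).esymm k) atTop (𝓝 S) := by
  have hind : Tendsto (fun v : Finset (Finset α) => ∑ t ∈ v,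
      (Set.powersetCard α k).indicator (fun t => ∏ i ∈ t, x i) t) atTop (𝓝 S) :=
    hasSum_subtype_iff_indicator.1 h
  have hpowerset : Tendsto (fun u : Finset α => u.powerset) atTop atTop :=
    tendsto_atTop_finset_of_monotone (fun _ _ => powerset_mono.2)
      (fun t => ⟨t, mem_powerset_self t⟩)
  refine (hind.comp hpowerset).congr fun u => ?_
  rw [Function.comp_apply, esymm_map_val, powersetCard_eq_filter, sum_filter]
  exact sum_congr rfl fun t _ => by by_cases ht : #t = k <;> simp [ht]

theorem HasSum.newton_five [LinearOrder α] [CommRing R] [TopologicalSpace R]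
    [IsTopologicalRing R] [T2Space R] {x : α → R} {z : ℕ → R} {S : R}
    (hS : HasSum (fun f : Fin 5 ↪o α => ∏ i, x (f i)) S)
    (hz : ∀ j ∈ Icc 1 5, HasSum (fun i => x i ^ j) (z j)) :
    120 * S = z 1 ^ 5 - 10 * z 1 ^ 3 * z 2 + 15 * z 1 * z 2 ^ 2
      + 20 * z 1 ^ 2 * z 3 - 20 * z 2 * z 3 - 30 * z 1 * z 4 + 24 * z 5 := by
  have p (j : ℕ) (hj : j ∈ Icc 1 5 := by decide) :
      Tendsto (fun u : Finset α => u.powerSum x j) atTop (𝓝 (z j)) := hz j hj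
  have e := (hasSum_prod_orderEmbedding_iff.1 hS).tendsto_esymm
  refine tendsto_nhds_unique ((e.const_mul 120).congr fun u => u.esymm_map_val_five x) ?_
  have p1 := p 1
  have p2 := p 2
  have p3 := p 3
  have p4 := p 4
  have p5 := p 5
  exact ((((((p1.pow 5).sub (((p1.pow 3).const_mul 10).mul p2)).add
    ((p1.const_mul 15).mul (p2.pow 2))).add (((p1.pow 2).const_mul 20).mul p3)).sub
    ((p2.const_mul 20).mul p3)).sub ((p1.const_mul 30).mul p4)).add (p5.const_mul 24)

end Limits

namespace PNat

theorem add_sub_cancel_left (a b : ℕ+) : a + b - a = b :=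
  add_left_cancel (add_sub_of_lt (lt_add_right a b))

def partialSums (m : ℕ+ × ℕ+ × ℕ+ × ℕ+ × ℕ+) : Fin 5 ↪o ℕ+ :=
  let (a, b, c, d, e) := m
  OrderEmbedding.ofStrictMono ![a, a + b, a + b + c, a + b + c + d, a + b + c + d + e] <| by
    refine Fin.strictMono_iff_lt_succ.2 fun i => ?_
    fin_cases i <;> exact lt_add_right _ _

def partialSumsEquiv : (ℕ+ × ℕ+ × ℕ+ × ℕ+ × ℕ+) ≃ (Fin 5 ↪o ℕ+) where
  toFun := partialSums
  invFun f := (f 0, f 1 - f 0, f 2 - f 1, f 3 - f 2, f 4 - f 3)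
  left_inv := fun (a, b, c, d, e) => by simp [partialSums, add_sub_cancel_left]
  right_inv f := by
    have h01 : f 0 < f 1 := f.strictMono (by decide)
    have h12 : f 1 < f 2 := f.strictMono (by decide)
    have h23 : f 2 < f 3 := f.strictMono (by decide)
    have h34 : f 3 < f 4 := f.strictMono (by decide)
    ext i
    fin_cases i <;> simp [partialSums, add_sub_of_lt, h01, h12, h23, h34]

theorem summable_prod_partialSums {x : ℕ+ → ℝ} (hx₀ : 0 ≤ x) (hx : Antitone x)
    (hs : Summable x) : Summable fun m => ∏ i, x (partialSums m i) := by
  have step {β : Type} {g : β → ℝ} (hg : Summable g) (hg₀ : 0 ≤ g) :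
      Summable (fun p : ℕ+ × β => x p.1 * g p.2) ∧ 0 ≤ fun p : ℕ+ × β => x p.1 * g p.2 :=
    ⟨hs.mul_of_nonneg hg hx₀ hg₀, fun p => mul_nonneg (hx₀ _) (hg₀ _)⟩
  obtain ⟨h2, h2₀⟩ := step hs hx₀
  obtain ⟨h3, h3₀⟩ := step h2 h2₀
  obtain ⟨h4, h4₀⟩ := step h3 h3₀
  obtain ⟨h5, -⟩ := step h4 h4₀
  refine h5.of_nonneg_of_le (fun _ => prod_nonneg fun _ _ => hx₀ _) fun ⟨a, b, c, d, e⟩ => ?_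
  calc ∏ i, x (partialSums (a, b, c, d, e) i) ≤ ∏ i, x (![a, b, c, d, e] i) := by
        have le (s t : ℕ+) : t ≤ s + t := (lt_add_left t s).le
        refine prod_le_prod (fun _ _ => hx₀ _) fun i _ => hx ?_
        fin_cases i <;> simp [partialSums, le]
    _ = x a * (x b * (x c * (x d * x e))) := by simp [Fin.prod_univ_five, mul_assoc]

end PNat

theorem Summable.tsum_prod_five {E β₁ β₂ β₃ β₄ β₅ : Type*} [AddCommGroup E] [UniformSpace E]
    [IsUniformAddGroup E] [CompleteSpace E] [T0Space E] {f : β₁ × β₂ × β₃ × β₄ × β₅ → E}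
    (hf : Summable f) :
    ∑' p, f p = ∑' (a) (b) (c) (d) (e), f (a, b, c, d, e) := by
  rw [hf.tsum_prod]
  refine tsum_congr fun a => ?_
  have ha := hf.prod_factor a
  rw [ha.tsum_prod]
  refine tsum_congr fun b => ?_
  have hb := ha.prod_factor b
  rw [hb.tsum_prod]
  exact tsum_congr fun c => (hb.prod_factor c).tsum_prod

theorem bernoulli'_six : bernoulli' 6 = 1 / 42 := by
  rw [bernoulli'_def]
  norm_num [sum_range_succ, bernoulli'_eq_zero_of_odd, Nat.choose]

theorem bernoulli'_eight : bernoulli' 8 = -1 / 30 := by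
  rw [bernoulli'_def]
  norm_num [sum_range_succ, bernoulli'_eq_zero_of_odd, Nat.choose, bernoulli'_six]

theorem bernoulli'_ten : bernoulli' 10 = 5 / 66 := by
  rw [bernoulli'_def]
  norm_num [sum_range_succ, bernoulli'_eq_zero_of_odd, Nat.choose, bernoulli'_six,
    bernoulli'_eight]

theorem bernoulli'_twelve : bernoulli' 12 = -691 / 2730 := by
  rw [bernoulli'_def]
  norm_num [sum_range_succ, bernoulli'_eq_zero_of_odd, Nat.choose, bernoulli'_six,
    bernoulli'_eight, bernoulli'_ten]

theorem bernoulli'_fourteen : bernoulli' 14 = 7 / 6 := by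
  rw [bernoulli'_def]
  norm_num [sum_range_succ, bernoulli'_eq_zero_of_odd, Nat.choose, bernoulli'_six,
    bernoulli'_eight, bernoulli'_ten, bernoulli'_twelve]

theorem bernoulli'_sixteen : bernoulli' 16 = -3617 / 510 := by
  rw [bernoulli'_def]
  norm_num [sum_range_succ, bernoulli'_eq_zero_of_odd, Nat.choose, bernoulli'_six,
    bernoulli'_eight, bernoulli'_ten, bernoulli'_twelve, bernoulli'_fourteen]

theorem bernoulli'_eighteen : bernoulli' 18 = 43867 / 798 := by
  rw [bernoulli'_def]
  norm_num [sum_range_succ, bernoulli'_eq_zero_of_odd, Nat.choose, bernoulli'_six,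
    bernoulli'_eight, bernoulli'_ten, bernoulli'_twelve, bernoulli'_fourteen, bernoulli'_sixteen]

theorem bernoulli'_twenty : bernoulli' 20 = -174611 / 330 := by
  rw [bernoulli'_def]
  norm_num [sum_range_succ, bernoulli'_eq_zero_of_odd, Nat.choose, bernoulli'_six,
    bernoulli'_eight, bernoulli'_ten, bernoulli'_twelve, bernoulli'_fourteen, bernoulli'_sixteen,
    bernoulli'_eighteen]

theorem hasSum_one_div_pow_four_pow {j : ℕ} (hj : j ≠ 0) :
    HasSum (fun n : ℕ+ => (1 / ((n : ℕ) : ℝ) ^ 4) ^ j)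
      ((-1) ^ (2 * j + 1) * 2 ^ (4 * j - 1) * π ^ (4 * j) * bernoulli (4 * j) / (4 * j)!) := by
  have h := hasSum_zeta_nat (k := 2 * j) (by omega)
  rw [show 2 * (2 * j) = 4 * j by ring] at h
  have hf : (fun n : ℕ+ => (1 / ((n : ℕ) : ℝ) ^ 4) ^ j) =
      fun n : ℕ+ => (fun m : ℕ => 1 / (m : ℝ) ^ (4 * j)) n :=
    funext fun n => by rw [div_pow, one_pow, ← pow_mul]
  rw [hf, hasSum_pnat_iff (f := fun m : ℕ => 1 / (m : ℝ) ^ (4 * j))]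
  simpa [hj] using h

theorem antitone_one_div_pow (k : ℕ) : Antitone fun n : ℕ+ => 1 / ((n : ℕ) : ℝ) ^ k :=
  fun a b hab => by
    have : (0 : ℝ) < (a : ℕ) := by exact_mod_cast a.pos
    dsimp only
    gcongr
    exact_mod_cast hab

theorem stmt_12 :
    ∑' (m₁ : ℕ+), ∑' (m₂ : ℕ+), ∑' (m₃ : ℕ+), ∑' (m₄ : ℕ+), ∑' (m₅ : ℕ+),
        (1 : ℝ) /
          (((m₁ : ℕ) : ℝ) ^ 4 *
            (((m₁ : ℕ) : ℝ) + ((m₂ : ℕ) : ℝ)) ^ 4 *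
            (((m₁ : ℕ) : ℝ) + ((m₂ : ℕ) : ℝ) + ((m₃ : ℕ) : ℝ)) ^ 4 *
            (((m₁ : ℕ) : ℝ) + ((m₂ : ℕ) : ℝ) + ((m₃ : ℕ) : ℝ) + ((m₄ : ℕ) : ℝ)) ^ 4 *
            (((m₁ : ℕ) : ℝ) + ((m₂ : ℕ) : ℝ) + ((m₃ : ℕ) : ℝ) + ((m₄ : ℕ) : ℝ) + ((m₅ : ℕ) : ℝ)) ^ 4)
      = Real.pi ^ 20 / 548828480360160000 := by
  let x : ℕ+ → ℝ := fun n => 1 / ((n : ℕ) : ℝ) ^ 4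
  have hz (j : ℕ) (hj : j ∈ Icc 1 5) :=
    hasSum_one_div_pow_four_pow (j := j) (by simp at hj; omega)
  have hsum := PNat.summable_prod_partialSums (x := x) (fun n => by positivity)
    (antitone_one_div_pow 4) (by simpa [x] using (hz 1 (by decide)).summable)
  have hS : HasSum (fun f : Fin 5 ↪o ℕ+ => ∏ i, x (f i))
      (∑' m, ∏ i, x (PNat.partialSums m i)) :=
    PNat.partialSumsEquiv.hasSum_iff.1 hsum.hasSum
  have key := hS.newton_five hz
  norm_num [bernoulli_eq_bernoulli'_of_ne_one, bernoulli'_four, bernoulli'_eight,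
    bernoulli'_twelve, bernoulli'_sixteen, bernoulli'_twenty, Nat.factorial] at key
  calc _ = ∑' (a) (b) (c) (d) (e), ∏ i, x (PNat.partialSums (a, b, c, d, e) i) := by
        simp [x, PNat.partialSums, Fin.prod_univ_five]
    _ = ∑' m, ∏ i, x (PNat.partialSums m i) := hsum.tsum_prod_five.symm
    _ = π ^ 20 / 548828480360160000 := by linarith
end
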